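/- The moment functions m_{(0,2)}, m_{(2,1)}, m_{(2,0)}, m_{(1,1)}, m_{(4,0)}, m_{(3,0)}, m_{(0,1)}, m_{(1,0)} defined by explicit formulas including m_{(1,0)}(t) = 0, m_{(2,0)}(t) = (1 - e^{-2t})/2, m_{(3,0)}(t) = 0, m_{(4,0)}(t) = 3/4 - (3/2)e^{-2t} + (3/4)e^{-4t}, and m_{(0,2)}(t) = 1/3 + (2/3)e^{-3t} + (-t/4 - 11/8)e^{-2t} + ((3/4)t^2 + t + 3/8)e^{-4t}, together with appropriate formulas for m_{(2,1)}, m_{(1,1)}, m_{(0,1)}, satisfy the closed linear ODE system: m_{(0,2)}' = -4 m_{(0,2)} + 2 m_{(2,1)} + m_{(2,0)} + 2 m_{(1,1)}; m_{(2,1)}' = -4 m_{(2,1)} + m_{(4,0)} + m_{(3,0)} + m_{(0,1)}; m_{(2,0)}' = 1 - 2 m_{(2,0)}; m_{(1,1)}' = m_{(2,0)} - 3 m_{(1,1)} + m_{(3,0)}; m_{(4,0)}' = 6 m_{(2,0)} - 4 m_{(4,0)}; m_{(3,0)}' = -3 m_{(3,0)} + 3 m_{(1,0)}; m_{(0,1)}'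 = m_{(2,0)} - 2 m_{(0,1)} + m_{(1,0)}; m_{(1,0)}' = - m_{(1,0)}, with all functions vanishing at t = 0. -/

import Mathlib

lemma hexp (c t : ℝ) : HasDerivAt (fun x => Real.exp (c * x)) (c * Real.exp (c * t)) t := by
  simpa [mul_comm] using ((hasDerivAt_id t).const_mul c).exp

lemma hlin (a b t : ℝ) : HasDerivAt (fun x : ℝ => a * x + b) a t := by
  simpa using ((hasDerivAt_id t).const_mul a).add_const b

lemma hquad (a b c t : ℝ) : HasDerivAt (fun x : ℝ => a * x ^ 2 + b * x + c)
    (2 * a * t + b) t := by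
  have h1 : HasDerivAt (fun x : ℝ => a * x ^ 2) (a * (2 * t)) t := by
    simpa using (hasDerivAt_pow 2 t).const_mul a
  have h := h1.add (hlin b c t)
  convert h using 1
  · rfl
  · rfl
  · funext x; simp only [Pi.add_apply, Pi.sub_apply]; ring
  · ring

lemma hmulexp (a b c t : ℝ) :
    HasDerivAt (fun x : ℝ => (a * x + b) * Real.exp (c * x))
      (a * Real.exp (c * t) + (a * t + b) * (c * Real.exp (c * t))) t :=
  (hlin a b t).mul (hexp c t)

lemma hquadexp (a b d c t : ℝ) :
    HasDerivAt (fun x : ℝ => (a * x ^ 2 + b * x + d) * Real.exp (c * x))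
      ((2 * a * t + b) * Real.exp (c * t)
        + (a * t ^ 2 + b * t + d) * (c * Real.exp (c * t))) t :=
  (hquad a b d t).mul (hexp c t)

/-- the explicit moment functions solve the closed 8-dimensional
linear moment ODE system of the Ornstein–Uhlenbeck environment example,
with all functions vanishing at `t = 0`. -/
theorem moment_closure_ode_system :
    let m10 : ℝ → ℝ := fun _ => 0
    let m20 : ℝ → ℝ := fun t => (1 - Real.exp (-2 * t)) / 2
    let m30 : ℝ → ℝ := fun _ => 0
    let m40 : ℝ → ℝ := fun t => 3 / 4 - (3 / 2) * Real.exp (-2 * t)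
      + (3 / 4) * Real.exp (-4 * t)
    let m01 : ℝ → ℝ := fun t => 1 / 4 - (1 / 4) * Real.exp (-2 * t)
      - (t / 2) * Real.exp (-2 * t)
    let m11 : ℝ → ℝ := fun t => 1 / 6 - (1 / 2) * Real.exp (-2 * t)
      + (1 / 3) * Real.exp (-3 * t)
    let m21 : ℝ → ℝ := fun t => 1 / 4 + (-3 / 4 - t / 4) * Real.exp (-2 * t)
      + ((3 / 4) * t + 1 / 2) * Real.exp (-4 * t)
    let m02 : ℝ → ℝ := fun t => 1 / 3 + (2 / 3) * Real.exp (-3 * t)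
      + (-t / 4 - 11 / 8) * Real.exp (-2 * t)
      + ((3 / 4) * t ^ 2 + t + 3 / 8) * Real.exp (-4 * t)
    (m02 0 = 0 ∧ m21 0 = 0 ∧ m20 0 = 0 ∧ m11 0 = 0 ∧ m40 0 = 0 ∧ m30 0 = 0 ∧
      m01 0 = 0 ∧ m10 0 = 0) ∧
    (∀ t : ℝ, HasDerivAt m02 (-4 * m02 t + 2 * m21 t + m20 t + 2 * m11 t) t) ∧
    (∀ t : ℝ, HasDerivAt m21 (-4 * m21 t + m40 t + m30 t + m01 t) t) ∧
    (∀ t : ℝ, HasDerivAt m20 (1 - 2 * m20 t) t) ∧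
    (∀ t : ℝ, HasDerivAt m11 (m20 t - 3 * m11 t + m30 t) t) ∧
    (∀ t : ℝ, HasDerivAt m40 (6 * m20 t - 4 * m40 t) t) ∧
    (∀ t : ℝ, HasDerivAt m30 (-3 * m30 t + 3 * m10 t) t) ∧
    (∀ t : ℝ, HasDerivAt m01 (m20 t - 2 * m01 t + m10 t) t) ∧
    (∀ t : ℝ, HasDerivAt m10 (-(m10 t)) t) := by
  refine ⟨⟨by norm_num, by norm_num, by norm_num, by norm_num, by norm_num,
    by norm_num, by norm_num, by norm_num⟩, ?_, ?_, ?_, ?_, ?_, ?_, ?_, ?_⟩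
  · intro t
    have h1 := (hasDerivAt_const t (1/3 : ℝ)).add ((hexp (-3) t).const_mul (2/3))
    have h2 := hmulexp (-1/4) (-11/8) (-2) t
    have h3 := hquadexp (3/4) 1 (3/8) (-4) t
    have h := (h1.add h2).add h3
    convert h using 1
    · rfl
    · rfl
    · funext x; simp only [Pi.add_apply, Pi.sub_apply]; ring
    · ring
  · intro t
    have h1 := hmulexp (-1/4) (-3/4) (-2) t
    have h2 := hmulexp (3/4) (1/2) (-4) t
    have h := ((hasDerivAt_const t (1/4 : ℝ)).add h1).add h2
    convert h using 1
    · rfl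
    · rfl
    · funext x; simp only [Pi.add_apply, Pi.sub_apply]; ring
    · ring
  · intro t
    have h := ((hasDerivAt_const t (1:ℝ)).sub (hexp (-2) t)).div_const 2
    convert h using 1
    · rfl
    · rfl
    · funext x; simp only [Pi.add_apply, Pi.sub_apply]
    ring
  · intro t
    have h := (((hasDerivAt_const t (1/6 : ℝ)).sub ((hexp (-2) t).const_mul (1/2))).add
      ((hexp (-3) t).const_mul (1/3)))
    convert h using 1
    · rfl
    · rfl
    · funext x; simp only [Pi.add_apply, Pi.sub_apply]
    ring
  · intro t
    have h := (((hasDerivAt_const t (3/4 : ℝ)).sub ((hexp (-2) t).const_mul (3/2))).add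
      ((hexp (-4) t).const_mul (3/4)))
    convert h using 1
    · rfl
    · rfl
    · funext x; simp only [Pi.add_apply, Pi.sub_apply]
    ring
  · intro t; simpa using hasDerivAt_const t (0:ℝ)
  · intro t
    have h1 := hmulexp (1/2) 0 (-2) t
    have h := ((hasDerivAt_const t (1/4 : ℝ)).sub ((hexp (-2) t).const_mul (1/4))).sub h1
    convert h using 1
    · rfl
    · rfl
    · funext x; simp only [Pi.add_apply, Pi.sub_apply]; ring
    · ring
  · intro t; simpa using hasDerivAt_const t (0:ℝ)
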